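/- arXiv:2207.05459 — 8 statements merged into one kernel-verified Lean document; each statement's English description precedes it below -/
import Mathlib

section
/- Let E and F be vector lattices (Riesz spaces) and T : E → F a positive, injective, interval preserving linear operator. Then T is a lattice homomorphism onto its range, and its range is an ideal of F. -/
/-!
An interval preserving map `T` is positive, hence monotone. Lifting `(T x)⁺ ∈ [0, T x⁺]` and
`(T x)⁻ ∈ [0, T x⁻]` gives `w ∈ [0, x⁺]` and `v ∈ [0, x⁻]` with `T (w - v) = T x`, so `w - v = x`
by injectivity. Then `x ≤ w` and `0 ≤ w` force `x⁺ ≤ w`, hence `w = x⁺` and `T x⁺ = (T x)⁺`;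
preserving positive parts is the same as preserving suprema. If `|z| ≤ |T a| ≤ T |a|`, lifting
`z⁺` and `z⁻` from `[0, T |a|]` exhibits `z` in the range.
-/

section

variable {E F Φ : Type*} [FunLike Φ E F]

section LatticeGroup

variable [Lattice E] [AddCommGroup E] [Lattice F] [AddCommGroup F] [AddMonoidHomClass Φ E F]
  {f : Φ}

theorem posPart_map_le_map_posPart (hf : Monotone f) (x : E) : (f x)⁺ ≤ f x⁺ :=
  sup_le (hf (le_posPart x)) (map_zero f ▸ hf (posPart_nonneg x))

theorem abs_map_le_map_abs (hf : Monotone f) (x : E) : |f x| ≤ f |x| :=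
  abs_le'.2 ⟨hf (le_abs_self x), map_neg f x ▸ hf (neg_le_abs x)⟩

end LatticeGroup

section Preorder

variable [Preorder E] [Zero E] [Preorder F] [Zero F]

def IsIntervalPreserving (T : Φ) : Prop :=
  ∀ u : E, 0 ≤ u → T '' Set.Icc 0 u = Set.Icc 0 (T u)

namespace IsIntervalPreserving

variable {T : Φ}

theorem exists_eq_of_mem_Icc (hT : IsIntervalPreserving T) {u : E} (hu : 0 ≤ u) {z : F}
    (hz : z ∈ Set.Icc 0 (T u)) : ∃ x ∈ Set.Icc 0 u, T x = z := by
  rwa [← hT u hu] at hz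

theorem map_nonneg [ZeroHomClass Φ E F] (hT : IsIntervalPreserving T) {u : E} (hu : 0 ≤ u) :
    0 ≤ T u := by
  have h0 : (0 : F) ∈ T '' Set.Icc 0 u := ⟨0, ⟨le_rfl, hu⟩, map_zero T⟩
  exact (hT u hu ▸ h0).2

end IsIntervalPreserving

end Preorder

namespace IsIntervalPreserving

variable [Lattice E] [AddCommGroup E] [Lattice F] [AddCommGroup F] [AddLeftMono F]
  [AddMonoidHomClass Φ E F] {T : Φ}

theorem mem_range_of_abs_le (hT : IsIntervalPreserving T) {u : E} (hu : 0 ≤ u) {z : F}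
    (hz : |z| ≤ T u) : z ∈ Set.range T := by
  obtain ⟨p, -, hp⟩ := hT.exists_eq_of_mem_Icc hu
    ⟨posPart_nonneg z, (sup_le (le_abs_self z) (abs_nonneg z)).trans hz⟩
  obtain ⟨q, -, hq⟩ := hT.exists_eq_of_mem_Icc hu
    ⟨negPart_nonneg z, (sup_le (neg_le_abs z) (abs_nonneg z)).trans hz⟩
  exact ⟨p - q, by rw [map_sub, hp, hq, posPart_sub_negPart]⟩

variable [AddLeftMono E]

theorem monotone (hT : IsIntervalPreserving T) : Monotone T := fun x y h => by
  simpa only [map_sub, sub_nonneg] using hT.map_nonneg (sub_nonneg.2 h)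

theorem map_posPart (hT : IsIntervalPreserving T) (hinj : Function.Injective T) (x : E) :
    T x⁺ = (T x)⁺ := by
  obtain ⟨w, ⟨hw₀, hw⟩, hTw⟩ := hT.exists_eq_of_mem_Icc (posPart_nonneg x)
    ⟨posPart_nonneg _, posPart_map_le_map_posPart hT.monotone x⟩
  obtain ⟨v, ⟨hv₀, -⟩, hTv⟩ := hT.exists_eq_of_mem_Icc (negPart_nonneg x)
    ⟨negPart_nonneg _, by
      simpa only [map_neg, posPart_neg] using posPart_map_le_map_posPart hT.monotone (-x)⟩
  have hwv : w - v = x := hinj (by rw [map_sub, hTw, hTv, posPart_sub_negPart])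
  have hxw : x⁺ ≤ w := sup_le (hwv ▸ sub_le_self w hv₀) hw₀
  rw [← le_antisymm hw hxw, hTw]

theorem map_sup (hT : IsIntervalPreserving T) (hinj : Function.Injective T) (x y : E) :
    T (x ⊔ y) = T x ⊔ T y := by
  rw [sup_eq_add_posPart_sub, map_add, hT.map_posPart hinj, map_sub, ← sup_eq_add_posPart_sub]

end IsIntervalPreserving

end

theorem positive_injective_intervalPreserving_isLatticeHom_and_range_ideal_general
    {E F : Type*}
    [Lattice E] [AddCommGroup E] [CovariantClass E E (· + ·) (· ≤ ·)] [Module ℝ E]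
    [Lattice F] [AddCommGroup F] [CovariantClass F F (· + ·) (· ≤ ·)] [Module ℝ F]
    (T : E →ₗ[ℝ] F)
    (hinj : Function.Injective T)
    (hip : ∀ u : E, 0 ≤ u → T '' Set.Icc 0 u = Set.Icc 0 (T u)) :
    (∀ x y : E, T (x ⊔ y) = T x ⊔ T y) ∧
    (∀ y ∈ Set.range T, ∀ z : F, |z| ≤ |y| → z ∈ Set.range T) := by
  have hT : IsIntervalPreserving T := hip
  refine ⟨hT.map_sup hinj, ?_⟩
  rintro _ ⟨a, rfl⟩ z hz
  exact hT.mem_range_of_abs_le (abs_nonneg a) (hz.trans (abs_map_le_map_abs hT.monotone a))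

/-- If `T : E → F` is a positive, injective, interval preserving linear
operator between vector lattices, then `T` is a lattice homomorphism (hence a lattice
isomorphism onto its range) and its range is an ideal (solid subspace) of `F`. -/
theorem positive_injective_intervalPreserving_isLatticeHom_and_range_ideal
    {E F : Type*}
    [Lattice E] [AddCommGroup E] [CovariantClass E E (· + ·) (· ≤ ·)] [Module ℝ E]
    [Lattice F] [AddCommGroup F] [CovariantClass F F (· + ·) (· ≤ ·)] [Module ℝ F]
    (T : E →ₗ[ℝ] F)
    (hpos : ∀ x : E, 0 ≤ x → 0 ≤ T x)
    (hinj : Function.Injective T)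
    (hip : ∀ u : E, 0 ≤ u → T '' Set.Icc 0 u = Set.Icc 0 (T u)) :
    (∀ x y : E, T (x ⊔ y) = T x ⊔ T y) ∧
    (∀ y ∈ Set.range T, ∀ z : F, |z| ≤ |y| → z ∈ Set.range T) :=
  positive_injective_intervalPreserving_isLatticeHom_and_range_ideal_general T hinj hip
end

section
/- Let E and F be vector lattices and T : E → F a positive lattice homomorphism whose range T[E] is an ideal in F. Then T is interval preserving, i.e., for every 0 ≤ u in E, T[[0,u]] = [0, T u]. -/
/-! A lattice homomorphism is monotone, which gives `T [[0,u]] ⊆ [0, T u]`. Conversely, if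
`0 ≤ v ≤ T u` then `|v| ≤ |T u|`, so `v = T w` for some `w` because the range is an ideal, and
the truncation `(w ⊔ 0) ⊓ u ∈ [0,u]` is mapped to `(v ⊔ 0) ⊓ T u = v`. -/

open Set

theorem monotone_of_map_sup {α β : Type*} [SemilatticeSup α] [SemilatticeSup β] {f : α → β}
    (hsup : ∀ x y, f (x ⊔ y) = f x ⊔ f y) : Monotone f :=
  OrderHomClass.mono (SupHom.mk f hsup)

section LatticeOrderedGroup

variable {E F : Type*}
  [Lattice E] [AddCommGroup E] [CovariantClass E E (· + ·) (· ≤ ·)]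
  [Lattice F] [AddCommGroup F] [CovariantClass F F (· + ·) (· ≤ ·)]

theorem AddMonoidHom.map_inf_of_map_sup (f : E →+ F) (hsup : ∀ x y, f (x ⊔ y) = f x ⊔ f y)
    (x y : E) : f (x ⊓ y) = f x ⊓ f y := by
  -- `a ⊓ b = a + b - a ⊔ b` in any lattice-ordered group
  rw [← add_sub_cancel_right (x ⊓ y) (x ⊔ y), inf_add_sup, map_sub, map_add, hsup,
    ← inf_add_sup (f x) (f y), add_sub_cancel_right]

theorem AddMonoidHom.mem_image_Icc_of_mem_range (f : E →+ F)
    (hsup : ∀ x y, f (x ⊔ y) = f x ⊔ f y) {u : E} (hu : 0 ≤ u) {v : F}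
    (hv : v ∈ Icc 0 (f u)) (hvf : v ∈ range f) : v ∈ f '' Icc 0 u := by
  obtain ⟨w, rfl⟩ := hvf
  refine ⟨(w ⊔ 0) ⊓ u, ⟨le_inf le_sup_right hu, inf_le_right⟩, ?_⟩
  rw [f.map_inf_of_map_sup hsup, hsup, map_zero, sup_eq_left.2 hv.1, inf_eq_left.2 hv.2]

end LatticeOrderedGroup

theorem latticeHom_range_ideal_intervalPreserving_general
    {E F : Type*}
    [Lattice E] [AddCommGroup E] [CovariantClass E E (· + ·) (· ≤ ·)] [Module ℝ E]
    [Lattice F] [AddCommGroup F] [CovariantClass F F (· + ·) (· ≤ ·)] [Module ℝ F]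
    (T : E →ₗ[ℝ] F)
    (hlat : ∀ x y : E, T (x ⊔ y) = T x ⊔ T y)
    (hideal : ∀ y ∈ Set.range T, ∀ z : F, |z| ≤ |y| → z ∈ Set.range T) :
    ∀ u : E, 0 ≤ u → T '' Set.Icc 0 u = Set.Icc 0 (T u) := by
  intro u hu
  apply Subset.antisymm
  · simpa only [map_zero] using (monotone_of_map_sup hlat).image_Icc_subset (a := 0) (b := u)
  · intro v hv
    have hv_range : v ∈ range T := hideal (T u) ⟨u, rfl⟩ v (abs_le_abs_of_nonneg hv.1 hv.2)
    exact T.toAddMonoidHom.mem_image_Icc_of_mem_range hlat hu hv hv_range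

/-- If `T : E → F` is a positive lattice homomorphism between vector
lattices whose range is an ideal of `F`, then `T` is interval preserving:
`T [[0,u]] = [0, T u]` for every `0 ≤ u`. -/
theorem latticeHom_range_ideal_intervalPreserving
    {E F : Type*}
    [Lattice E] [AddCommGroup E] [CovariantClass E E (· + ·) (· ≤ ·)] [Module ℝ E]
    [Lattice F] [AddCommGroup F] [CovariantClass F F (· + ·) (· ≤ ·)] [Module ℝ F]
    (T : E →ₗ[ℝ] F)
    (hpos : ∀ x : E, 0 ≤ x → 0 ≤ T x)
    (hlat : ∀ x y : E, T (x ⊔ y) = T x ⊔ T y)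
    (hideal : ∀ y ∈ Set.range T, ∀ z : F, |z| ≤ |y| → z ∈ Set.range T) :
    ∀ u : E, 0 ≤ u → T '' Set.Icc 0 u = Set.Icc 0 (T u) :=
  latticeHom_range_ideal_intervalPreserving_general T hlat hideal
end

section
/- Let E, F be vector lattices and T : E → F a positive interval preserving linear operator. Then the order adjoint T^∼ : F^∼ → E^∼, defined by T^∼(φ) = φ ∘ T, is a lattice homomorphism. -/
section OrderDual

variable {X : Type*} [Lattice X] [AddCommGroup X] [Module ℝ X]

/-- `φ` is an order bounded linear functional: it is bounded on order intervals. -/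
def OrdBddFunctional (φ : X →ₗ[ℝ] ℝ) : Prop :=
  ∀ u : X, 0 ≤ u → BddAbove (φ '' Set.Icc 0 u) ∧ BddBelow (φ '' Set.Icc 0 u)

/-- The Riesz–Kantorovich set whose supremum is `(f ⊔ g)(u)` in the order dual:
`{ f v + g (u - v) : 0 ≤ v ≤ u }`. -/
def rkSet (f g : X →ₗ[ℝ] ℝ) (u : X) : Set ℝ :=
  (fun v => f v + g (u - v)) '' Set.Icc 0 u

end OrderDual

theorem rkSet_comp_of_image_Icc {X Y : Type*}
    [Lattice X] [AddCommGroup X] [Module ℝ X] [Lattice Y] [AddCommGroup Y] [Module ℝ Y]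
    (T : X →ₗ[ℝ] Y) (f g : Y →ₗ[ℝ] ℝ) {u : X} (hT : T '' Set.Icc 0 u = Set.Icc 0 (T u)) :
    rkSet (f.comp T) (g.comp T) u = rkSet f g (T u) := by
  rw [rkSet, rkSet, ← hT, Set.image_image]
  simp only [LinearMap.comp_apply, map_sub]

theorem orderAdjoint_latticeHom_of_intervalPreserving_general
    {E F : Type*}
    [Lattice E] [AddCommGroup E] [Module ℝ E]
    [Lattice F] [AddCommGroup F] [Module ℝ F]
    (T : E →ₗ[ℝ] F)
    (hip : ∀ u : E, 0 ≤ u → T '' Set.Icc 0 u = Set.Icc 0 (T u))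
    (φ ψ : F →ₗ[ℝ] ℝ) :
    ∀ u : E, 0 ≤ u →
      sSup (rkSet (φ.comp T) (ψ.comp T) u) = sSup (rkSet φ ψ (T u)) :=
  fun u hu => congrArg sSup (rkSet_comp_of_image_Icc T φ ψ (hip u hu))

/-- If `T : E → F` is a positive interval preserving linear operator
between vector lattices, then the order adjoint `T^∼ : F^∼ → E^∼`, `φ ↦ φ ∘ T`, is a
lattice homomorphism.  By the Riesz–Kantorovich formula, this says precisely that for
all order bounded `φ, ψ` on `F` one has
`((φ ∘ T) ⊔ (ψ ∘ T))(u) = ((φ ⊔ ψ) ∘ T)(u)` for every `0 ≤ u`, where the suprema in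
the order duals are computed by the Riesz–Kantorovich formula. -/
theorem orderAdjoint_latticeHom_of_intervalPreserving
    {E F : Type*}
    [Lattice E] [AddCommGroup E] [CovariantClass E E (· + ·) (· ≤ ·)] [Module ℝ E]
    [Lattice F] [AddCommGroup F] [CovariantClass F F (· + ·) (· ≤ ·)] [Module ℝ F]
    (T : E →ₗ[ℝ] F)
    (hpos : ∀ x : E, 0 ≤ x → 0 ≤ T x)
    (hip : ∀ u : E, 0 ≤ u → T '' Set.Icc 0 u = Set.Icc 0 (T u))
    (φ ψ : F →ₗ[ℝ] ℝ) (hφ : OrdBddFunctional φ) (hψ : OrdBddFunctional ψ) :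
    ∀ u : E, 0 ≤ u →
      sSup (rkSet (φ.comp T) (ψ.comp T) u) = sSup (rkSet φ ψ (T u)) :=
  orderAdjoint_latticeHom_of_intervalPreserving_general T hip φ ψ
end

section
/- Let E and F be vector lattices and T : E → F a surjective lattice homomorphism. Then the range of the order adjoint T^∼ : F^∼ → E^∼ equals the annihilator of ker T, i.e., T^∼[F^∼] = {φ ∈ E^∼ : φ(u) = 0 for all u ∈ ker T}. -/
/-!
Vanishing on `ker T` is exactly what is needed for `ψ` to factor algebraically as `φ ∘ T`
(the range of the algebraic adjoint is the annihilator of the kernel). Order boundedness of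
`φ` then comes for free: a surjective lattice homomorphism maps the order interval
`[0, u⁺]` onto `[0, T u]`, so `φ` is bounded on `[0, T u]` because `ψ` is bounded on `[0, u⁺]`.
-/

theorem map_inf_of_map_sup {E F G : Type*} [Lattice E] [AddCommGroup E] [AddLeftMono E]
    [Lattice F] [AddCommGroup F] [AddLeftMono F] [FunLike G E F] [AddMonoidHomClass G E F]
    (T : G) (hsup : ∀ x y : E, T (x ⊔ y) = T x ⊔ T y) (x y : E) :
    T (x ⊓ y) = T x ⊓ T y := by
  rw [← neg_neg (x ⊓ y), neg_inf, map_neg, hsup, map_neg, map_neg, neg_sup, neg_neg, neg_neg]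

theorem Icc_zero_subset_image_Icc_zero_sup_zero {E F : Type*} [Lattice E] [Zero E]
    [Lattice F] [Zero F] {T : E → F} (hzero : T 0 = 0)
    (hsup : ∀ x y : E, T (x ⊔ y) = T x ⊔ T y) (hinf : ∀ x y : E, T (x ⊓ y) = T x ⊓ T y)
    (hsurj : Function.Surjective T) (u : E) :
    Set.Icc 0 (T u) ⊆ T '' Set.Icc 0 (u ⊔ 0) := by
  intro v ⟨hv₀, hvu⟩
  obtain ⟨x, rfl⟩ := hsurj v
  refine ⟨(x ⊔ 0) ⊓ (u ⊔ 0), ⟨le_inf le_sup_right le_sup_right, inf_le_right⟩, ?_⟩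
  rw [hinf, hsup, hsup, hzero, sup_of_le_left hv₀, sup_of_le_left (hv₀.trans hvu),
    inf_of_le_left hvu]

theorem OrdBddFunctional.of_comp {E F : Type*}
    [Lattice E] [AddCommGroup E] [AddLeftMono E] [Module ℝ E]
    [Lattice F] [AddCommGroup F] [AddLeftMono F] [Module ℝ F]
    {T : E →ₗ[ℝ] F} (hsup : ∀ x y : E, T (x ⊔ y) = T x ⊔ T y)
    (hsurj : Function.Surjective T) {φ : F →ₗ[ℝ] ℝ} (hφT : OrdBddFunctional (φ.comp T)) :
    OrdBddFunctional φ := by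
  intro w _
  obtain ⟨u, rfl⟩ := hsurj w
  have hsub : φ '' Set.Icc 0 (T u) ⊆ φ.comp T '' Set.Icc 0 (u ⊔ 0) := by
    rw [LinearMap.coe_comp, Set.image_comp]
    exact Set.image_mono <| Icc_zero_subset_image_Icc_zero_sup_zero (map_zero T) hsup
      (map_inf_of_map_sup T hsup) hsurj u
  obtain ⟨hbddAbove, hbddBelow⟩ := hφT (u ⊔ 0) le_sup_right
  exact ⟨hbddAbove.mono hsub, hbddBelow.mono hsub⟩

/-- If `T : E → F` is a surjective lattice homomorphism, then the range
of the order adjoint `T^∼ : F^∼ → E^∼` equals the annihilator of `ker T`; i.e. an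
order bounded functional `ψ` on `E` is of the form `φ ∘ T` with `φ ∈ F^∼` if and only
if `ψ` vanishes on `ker T`. -/
theorem range_orderAdjoint_eq_annihilator_ker
    {E F : Type*}
    [Lattice E] [AddCommGroup E] [CovariantClass E E (· + ·) (· ≤ ·)] [Module ℝ E]
    [Lattice F] [AddCommGroup F] [CovariantClass F F (· + ·) (· ≤ ·)] [Module ℝ F]
    (T : E →ₗ[ℝ] F)
    (hlat : ∀ x y : E, T (x ⊔ y) = T x ⊔ T y)
    (hsurj : Function.Surjective T) :
    ∀ ψ : E →ₗ[ℝ] ℝ, OrdBddFunctional ψ →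
      ((∃ φ : F →ₗ[ℝ] ℝ, OrdBddFunctional φ ∧ ψ = φ.comp T) ↔
        ∀ u ∈ LinearMap.ker T, ψ u = 0) := by
  intro ψ hψ
  constructor
  · rintro ⟨φ, -, rfl⟩ u hu
    simp [LinearMap.mem_ker.mp hu]
  · intro hker
    obtain ⟨φ, rfl⟩ : ψ ∈ LinearMap.range T.dualMap := by
      rw [LinearMap.range_dualMap_eq_dualAnnihilator_ker]
      exact (Submodule.mem_dualAnnihilator ψ).mpr hker
    exact ⟨φ, OrdBddFunctional.of_comp hlat hsurj hψ, rfl⟩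
end

section
/- Let (E_α)_{α∈I} be a family of vector lattices. The order continuous dual of the product ∏ E_α is lattice isomorphic to the direct sum ⊕ (E_α)^∼_n of the order continuous duals, via the map φ ↦ (ι_α^∼ φ)_{α∈I}, where ι_α : E_α → ∏ E_α is the canonical injection. -/
section Defs

variable {X : Type*} [Lattice X] [AddCommGroup X] [Module ℝ X]

/-- A linear functional is order continuous if `inf |φ[A]| = 0` whenever `A` is a
(nonempty) downward directed set with infimum `0`. -/
def OrdContFunctional (φ : X →ₗ[ℝ] ℝ) : Prop :=
  ∀ A : Set X, A.Nonempty → DirectedOn (· ≥ ·) A → IsGLB A 0 →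
    IsGLB ((fun u => |φ u|) '' A) 0

/-- A positive linear functional. -/
def PosFunctional (φ : X →ₗ[ℝ] ℝ) : Prop := ∀ u : X, 0 ≤ u → 0 ≤ φ u

end Defs

/-!
For `0 ≤ x` in `∏ E i` the tails `s.piecewise 0 x` (`s` finite) decrease to `0`, so an order
continuous `φ` is approximated at `x` by the finite sums `∑ j ∈ s, φ (ι_j (x j))`. This gives
bipositivity of `φ ↦ (φ ∘ ι_i)_i`, and injectivity once applied to `φ - ψ`. That `φ - ψ` is again
order continuous is the one delicate point: an order bounded, order continuous functional is small
on a whole interval `[0, a]` for some `a` in any `A ↓ 0`, by comparing with a near-maximiser of the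
functional on a fixed interval `[0, a₀]`.
-/

theorem isGLB_abs_image_zero_iff {α : Type*} {A : Set α} (f : α → ℝ) :
    IsGLB ((fun a => |f a|) '' A) 0 ↔ ∀ ε > 0, ∃ a ∈ A, |f a| < ε := by
  refine ⟨fun h ε hε => ?_, fun h => ⟨?_, fun c hc => ?_⟩⟩
  · obtain ⟨_, ⟨a, ha, rfl⟩, -, hlt⟩ := h.exists_between hε
    exact ⟨a, ha, hlt⟩
  · rintro _ ⟨a, -, rfl⟩
    exact abs_nonneg _
  · by_contra! hc0
    obtain ⟨a, ha, hlt⟩ := h c hc0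
    exact (hc ⟨a, ha, rfl⟩).not_gt hlt

theorem IsGLB.image_inf_left {α : Type*} [Lattice α] {A : Set α} {a x : α} (h : IsGLB A a)
    (hx : a ≤ x) : IsGLB ((x ⊓ ·) '' A) a := by
  refine ⟨?_, fun c hc => h.2 fun b hb => (hc ⟨b, hb, rfl⟩).trans inf_le_right⟩
  rintro _ ⟨b, hb, rfl⟩
  exact le_inf hx (h.1 hb)

section Dual

variable {X Y : Type*} [Lattice X] [AddCommGroup X] [Module ℝ X]
  [Lattice Y] [AddCommGroup Y] [Module ℝ Y]

theorem ordContFunctional_iff {φ : X →ₗ[ℝ] ℝ} :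
    OrdContFunctional φ ↔ ∀ A : Set X, A.Nonempty → DirectedOn (· ≥ ·) A → IsGLB A 0 →
      ∀ ε > 0, ∃ a ∈ A, |φ a| < ε := by
  simp only [OrdContFunctional, isGLB_abs_image_zero_iff]

theorem ordBddFunctional_zero : OrdBddFunctional (0 : X →ₗ[ℝ] ℝ) := fun u _ => by
  refine ⟨⟨0, ?_⟩, ⟨0, ?_⟩⟩ <;> rintro _ ⟨v, -, rfl⟩ <;> simp

theorem ordContFunctional_zero : OrdContFunctional (0 : X →ₗ[ℝ] ℝ) :=
  ordContFunctional_iff.2 fun _ ⟨a, ha⟩ _ _ _ hε => ⟨a, ha, by simpa using hε⟩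

theorem OrdBddFunctional.neg {φ : X →ₗ[ℝ] ℝ} (hφ : OrdBddFunctional φ) :
    OrdBddFunctional (-φ) := fun u hu => by
  obtain ⟨hM, hm⟩ := hφ u hu
  have himg : (-φ) '' Set.Icc 0 u = -(φ '' Set.Icc 0 u) := by
    rw [← Set.image_neg_eq_neg, Set.image_image]
    rfl
  rw [himg]
  exact ⟨hm.neg, hM.neg⟩

theorem OrdContFunctional.neg {φ : X →ₗ[ℝ] ℝ} (hφ : OrdContFunctional φ) :
    OrdContFunctional (-φ) := by
  simpa only [OrdContFunctional, LinearMap.neg_apply, abs_neg] using hφ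

open scoped Pointwise in
theorem OrdBddFunctional.add {φ ψ : X →ₗ[ℝ] ℝ} (hφ : OrdBddFunctional φ)
    (hψ : OrdBddFunctional ψ) : OrdBddFunctional (φ + ψ) := fun u hu => by
  have himg : (φ + ψ) '' Set.Icc 0 u ⊆ φ '' Set.Icc 0 u + ψ '' Set.Icc 0 u := by
    rintro _ ⟨v, hv, rfl⟩
    exact Set.add_mem_add ⟨v, hv, rfl⟩ ⟨v, hv, rfl⟩
  exact ⟨((hφ u hu).1.add (hψ u hu).1).mono himg, ((hφ u hu).2.add (hψ u hu).2).mono himg⟩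

section LatticeOrderedGroup

variable [AddLeftMono X]

theorem OrdContFunctional.exists_forall_Icc_lt {θ : X →ₗ[ℝ] ℝ} (hb : OrdBddFunctional θ)
    (hc : OrdContFunctional θ) {A : Set X} (hne : A.Nonempty) (hdir : DirectedOn (· ≥ ·) A)
    (hglb : IsGLB A 0) {ε : ℝ} (hε : 0 < ε) : ∃ a ∈ A, ∀ v ∈ Set.Icc 0 a, θ v < ε := by
  obtain ⟨a₀, ha₀⟩ := hne
  have ha₀_nonneg : 0 ≤ a₀ := hglb.1 ha₀
  set p := sSup (θ '' Set.Icc 0 a₀)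
  have hle_p : ∀ v ∈ Set.Icc 0 a₀, θ v ≤ p := fun v hv =>
    le_csSup (hb a₀ ha₀_nonneg).1 ⟨v, hv, rfl⟩
  obtain ⟨_, ⟨v₀, hv₀, rfl⟩, hv₀p⟩ := exists_lt_of_lt_csSup
    ((Set.nonempty_Icc.2 ha₀_nonneg).image θ) (sub_lt_self p (by positivity : 0 < ε / 3))
  obtain ⟨a₁, ha₁, hθa₁⟩ : ∃ a₁ ∈ A, |θ (v₀ ⊓ a₁)| < ε / 3 := by
    obtain ⟨_, ⟨a₁, ha₁, rfl⟩, h⟩ := ordContFunctional_iff.1 hc _ (Set.Nonempty.image _ ⟨a₀, ha₀⟩)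
      (hdir.mono_comp fun _ _ h => inf_le_inf_left v₀ h) (hglb.image_inf_left hv₀.1)
      (ε / 3) (by positivity)
    exact ⟨a₁, ha₁, h⟩
  obtain ⟨a, ha, ha₁', ha₀'⟩ := hdir a₁ ha₁ a₀ ha₀
  refine ⟨a, ha, fun v hv => ?_⟩
  -- both `v ⊔ v₀` and `v₀ - v₀ ⊓ a₁ + v ⊓ v₀` lie in `[0, a₀]`, where `θ < θ v₀ + ε / 3`
  have hsup : θ (v ⊔ v₀) ≤ p := hle_p _ ⟨hv.1.trans le_sup_left, sup_le (hv.2.trans ha₀') hv₀.2⟩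
  have hinf_le : v ⊓ v₀ ≤ v₀ ⊓ a₁ := le_inf inf_le_right (inf_le_left.trans (hv.2.trans ha₁'))
  have hshift : θ (v₀ - v₀ ⊓ a₁ + v ⊓ v₀) ≤ p := by
    refine hle_p _ ⟨add_nonneg (sub_nonneg.2 inf_le_left) (le_inf hv.1 hv₀.1), ?_⟩
    calc v₀ - v₀ ⊓ a₁ + v ⊓ v₀ ≤ v₀ - v₀ ⊓ a₁ + v₀ ⊓ a₁ := add_le_add_right hinf_le _
      _ = v₀ := sub_add_cancel _ _
      _ ≤ a₀ := hv₀.2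
  have hmod : θ (v ⊓ v₀) + θ (v ⊔ v₀) = θ v + θ v₀ := by rw [← map_add, ← map_add, inf_add_sup]
  rw [map_add, map_sub] at hshift
  linarith [le_abs_self (θ (v₀ ⊓ a₁))]

theorem OrdContFunctional.exists_forall_Icc_abs_lt {θ : X →ₗ[ℝ] ℝ} (hb : OrdBddFunctional θ)
    (hc : OrdContFunctional θ) {A : Set X} (hne : A.Nonempty) (hdir : DirectedOn (· ≥ ·) A)
    (hglb : IsGLB A 0) {ε : ℝ} (hε : 0 < ε) : ∃ a ∈ A, ∀ v ∈ Set.Icc 0 a, |θ v| < ε := by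
  obtain ⟨a₁, ha₁, h₁⟩ := hc.exists_forall_Icc_lt hb hne hdir hglb hε
  obtain ⟨a₂, ha₂, h₂⟩ := hc.neg.exists_forall_Icc_lt hb.neg hne hdir hglb hε
  obtain ⟨a, ha, ha₁', ha₂'⟩ := hdir a₁ ha₁ a₂ ha₂
  refine ⟨a, ha, fun v hv => abs_lt.2 ⟨?_, h₁ v ⟨hv.1, hv.2.trans ha₁'⟩⟩⟩
  linarith [h₂ v ⟨hv.1, hv.2.trans ha₂'⟩, LinearMap.neg_apply θ v]

theorem OrdContFunctional.add {φ ψ : X →ₗ[ℝ] ℝ} (hbφ : OrdBddFunctional φ)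
    (hcφ : OrdContFunctional φ) (hbψ : OrdBddFunctional ψ) (hcψ : OrdContFunctional ψ) :
    OrdContFunctional (φ + ψ) := by
  refine ordContFunctional_iff.2 fun A hne hdir hglb ε hε => ?_
  obtain ⟨a₁, ha₁, h₁⟩ := hcφ.exists_forall_Icc_abs_lt hbφ hne hdir hglb (half_pos hε)
  obtain ⟨a₂, ha₂, h₂⟩ := hcψ.exists_forall_Icc_abs_lt hbψ hne hdir hglb (half_pos hε)
  obtain ⟨a, ha, ha₁', ha₂'⟩ := hdir a₁ ha₁ a₂ ha₂
  refine ⟨a, ha, ?_⟩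
  calc |(φ + ψ) a| ≤ |φ a| + |ψ a| := abs_add_le _ _
    _ < ε / 2 + ε / 2 := add_lt_add (h₁ a ⟨hglb.1 ha, ha₁'⟩) (h₂ a ⟨hglb.1 ha, ha₂'⟩)
    _ = ε := add_halves ε

variable (X) in
def orderContinuousDual : AddSubgroup (X →ₗ[ℝ] ℝ) where
  carrier := {φ | OrdBddFunctional φ ∧ OrdContFunctional φ}
  zero_mem' := ⟨ordBddFunctional_zero, ordContFunctional_zero⟩
  add_mem' hφ hψ := ⟨hφ.1.add hψ.1, hφ.2.add hφ.1 hψ.1 hψ.2⟩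
  neg_mem' hφ := ⟨hφ.1.neg, hφ.2.neg⟩

end LatticeOrderedGroup

theorem OrdBddFunctional.comp {φ : Y →ₗ[ℝ] ℝ} (hφ : OrdBddFunctional φ) {T : X →ₗ[ℝ] Y}
    (hT : Monotone T) : OrdBddFunctional (φ.comp T) := fun u hu => by
  have hsub : φ.comp T '' Set.Icc 0 u ⊆ φ '' Set.Icc 0 (T u) := by
    rintro _ ⟨v, hv, rfl⟩
    exact ⟨T v, ⟨map_zero T ▸ hT hv.1, hT hv.2⟩, rfl⟩
  obtain ⟨hM, hm⟩ := hφ (T u) (map_zero T ▸ hT hu)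
  exact ⟨hM.mono hsub, hm.mono hsub⟩

theorem OrdContFunctional.comp {φ : Y →ₗ[ℝ] ℝ} (hφ : OrdContFunctional φ) {T : X →ₗ[ℝ] Y}
    (hT : Monotone T) (hTglb : ∀ A : Set X, A.Nonempty → IsGLB A 0 → IsGLB (T '' A) 0) :
    OrdContFunctional (φ.comp T) := fun A hne hdir hglb => by
  rw [show (fun u => |φ.comp T u|) '' A = (fun u => |φ u|) '' (T '' A) by
    rw [Set.image_image]; rfl]
  exact hφ _ (hne.image T) (hdir.mono_comp fun _ _ h => hT h) (hTglb A hne hglb)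

end Dual

instance Pi.addLeftMono {I : Type*} {E : I → Type*} [∀ i, Preorder (E i)] [∀ i, Add (E i)]
    [∀ i, AddLeftMono (E i)] : AddLeftMono (∀ i, E i) :=
  ⟨fun _ _ _ h i => add_le_add_right (h i) _⟩

section Product

variable {I : Type*} [DecidableEq I] {E : I → Type*}

theorem isGLB_image_single [∀ i, Preorder (E i)] [∀ i, Zero (E i)] {i : I} {A : Set (E i)}
    (hne : A.Nonempty) (h : IsGLB A 0) : IsGLB (Pi.single i '' A) 0 := by
  refine isGLB_pi.2 fun j => ?_
  rw [Set.image_image]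
  rcases eq_or_ne j i with rfl | hj
  · simpa using h
  · simp [Pi.single_eq_of_ne hj, hne.image_const, isGLB_singleton]

theorem Finset.piecewise_zero_eq_sum_single [∀ i, AddCommMonoid (E i)] (s : Finset I)
    (f : ∀ i, E i) : s.piecewise f 0 = ∑ i ∈ s, Pi.single i (f i) := by
  ext k
  simp [Finset.piecewise, Finset.sum_pi_single]

theorem Finset.piecewise_zero_left_eq_sub [∀ i, AddGroup (E i)] (s : Finset I)
    (f : ∀ i, E i) : s.piecewise (0 : ∀ i, E i) f = f - s.piecewise f 0 := by
  ext k
  by_cases hk : k ∈ s <;> simp [hk]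

variable [∀ i, Preorder (E i)] [∀ i, Zero (E i)]

theorem antitone_piecewise_zero {x : ∀ i, E i} (hx : 0 ≤ x) :
    Antitone fun s : Finset I => s.piecewise (0 : ∀ i, E i) x := by
  intro s t hst k
  simp only [Finset.piecewise, Pi.zero_apply]
  split_ifs with hkt hks hks
  · exact le_rfl
  · exact hx k
  · exact absurd (hst hks) hkt
  · exact le_rfl

theorem isGLB_range_piecewise_zero {x : ∀ i, E i} (hx : 0 ≤ x) :
    IsGLB (Set.range fun s : Finset I => s.piecewise (0 : ∀ i, E i) x) 0 := by
  refine ⟨?_, fun c hc k => ?_⟩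
  · rintro _ ⟨s, rfl⟩
    exact (s.piecewise_same (0 : ∀ i, E i)).ge.trans (s.piecewise_le_piecewise le_rfl hx)
  · simpa using hc ⟨{k}, rfl⟩ k

end Product

section ProductDual

variable {I : Type*} [DecidableEq I] {E : I → Type*}
  [∀ i, Lattice (E i)] [∀ i, AddCommGroup (E i)] [∀ i, Module ℝ (E i)]

theorem OrdContFunctional.exists_abs_sub_sum_single_lt {φ : (∀ i, E i) →ₗ[ℝ] ℝ}
    (hφ : OrdContFunctional φ) {x : ∀ i, E i} (hx : 0 ≤ x) {ε : ℝ} (hε : 0 < ε) :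
    ∃ s : Finset I, |φ x - ∑ j ∈ s, φ (Pi.single j (x j))| < ε := by
  obtain ⟨_, ⟨s, rfl⟩, hs⟩ := ordContFunctional_iff.1 hφ _ (Set.range_nonempty _)
    (directedOn_range.2 (antitone_piecewise_zero hx).directed_ge) (isGLB_range_piecewise_zero hx)
    ε hε
  refine ⟨s, ?_⟩
  dsimp only at hs
  rwa [Finset.piecewise_zero_left_eq_sub, map_sub, Finset.piecewise_zero_eq_sum_single,
    map_sum] at hs

theorem OrdContFunctional.posFunctional_of_comp_single {φ : (∀ i, E i) →ₗ[ℝ] ℝ}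
    (hφ : OrdContFunctional φ) (h : ∀ i, PosFunctional (φ.comp (LinearMap.single ℝ E i))) :
    PosFunctional φ := fun x hx => by
  refine le_of_forall_pos_lt_add fun ε hε => ?_
  obtain ⟨s, hs⟩ := hφ.exists_abs_sub_sum_single_lt hx hε
  have hsum : 0 ≤ ∑ j ∈ s, φ (Pi.single j (x j)) :=
    Finset.sum_nonneg fun j _ => h j (x j) (hx j)
  linarith [(abs_lt.1 hs).1]

variable [∀ i, AddLeftMono (E i)]

theorem OrdContFunctional.eq_zero_of_comp_single {φ : (∀ i, E i) →ₗ[ℝ] ℝ}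
    (hφ : OrdContFunctional φ) (h : ∀ i, φ.comp (LinearMap.single ℝ E i) = 0) : φ = 0 := by
  have hsingle (j : I) (v : E j) : φ (Pi.single j v) = 0 := LinearMap.congr_fun (h j) v
  have hnonneg {x : ∀ i, E i} (hx : 0 ≤ x) : φ x = 0 := by
    refine abs_nonpos_iff.1 (le_of_forall_pos_lt_add fun ε hε => ?_)
    obtain ⟨s, hs⟩ := hφ.exists_abs_sub_sum_single_lt hx hε
    simpa [hsingle] using hs
  ext x
  rw [← posPart_sub_negPart x, map_sub, hnonneg (posPart_nonneg x), hnonneg (negPart_nonneg x),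
    sub_zero, LinearMap.zero_apply]

/-- With `φ (ι_i (w i)) = 1` for `i ∈ S`, every finite `t ⊆ S` gives
`#t = φ (∑ i ∈ t, ι_i (w i)⁺) - φ (∑ i ∈ t, ι_i (w i)⁻)`, a difference of two values of `φ` on
`[0, (|w i|)_i]`. -/
theorem OrdBddFunctional.finite_setOf_comp_single_ne_zero {φ : (∀ i, E i) →ₗ[ℝ] ℝ}
    (hφ : OrdBddFunctional φ) : {i | φ.comp (LinearMap.single ℝ E i) ≠ 0}.Finite := by
  set S := {i | φ.comp (LinearMap.single ℝ E i) ≠ 0}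
  have hw (i : I) : ∃ w : E i, i ∈ S → φ (Pi.single i w) = 1 := by
    by_cases hi : i ∈ S
    · obtain ⟨v, hv⟩ : ∃ v, φ (Pi.single i v) ≠ 0 := DFunLike.ne_iff.1 hi
      refine ⟨(φ (Pi.single i v))⁻¹ • v, fun _ => ?_⟩
      rw [Pi.single_smul, map_smul, smul_eq_mul, inv_mul_cancel₀ hv]
    · exact ⟨0, fun h => absurd h hi⟩
  choose w hw using hw
  set x : ∀ i, E i := fun i => |w i|
  have hmem {f : ∀ i, E i} (hf₀ : 0 ≤ f) (hfx : f ≤ x) (t : Finset I) :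
      t.piecewise f 0 ∈ Set.Icc 0 x :=
    ⟨(t.piecewise_same (0 : ∀ i, E i)).ge.trans (t.piecewise_le_piecewise hf₀ le_rfl),
      (t.piecewise_le_piecewise hfx (fun i => abs_nonneg (w i))).trans (t.piecewise_same x).le⟩
  obtain ⟨⟨M, hM⟩, ⟨m, hm⟩⟩ := hφ x fun i => abs_nonneg (w i)
  by_contra hS
  obtain ⟨n, hn⟩ := exists_nat_gt (M - m)
  obtain ⟨t, htS, rfl⟩ := Set.Infinite.exists_subset_card_eq hS n
  have hcard :
      φ (t.piecewise (fun i => (w i)⁺) 0) - φ (t.piecewise (fun i => (w i)⁻) 0) = t.card := by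
    rw [← map_sub, Finset.piecewise_zero_eq_sum_single, Finset.piecewise_zero_eq_sum_single,
      ← Finset.sum_sub_distrib, map_sum]
    simp only [← Pi.single_sub, posPart_sub_negPart]
    rw [Finset.sum_congr rfl fun i hi => hw i (htS hi), Finset.sum_const, nsmul_one]
  have hpos := hM ⟨_, hmem (fun i => posPart_nonneg (w i)) (fun i =>
    (le_add_of_nonneg_right (negPart_nonneg (w i))).trans_eq (posPart_add_negPart _)) t, rfl⟩
  have hneg := hm ⟨_, hmem (fun i => negPart_nonneg (w i)) (fun i =>
    (le_add_of_nonneg_left (posPart_nonneg (w i))).trans_eq (posPart_add_negPart _)) t, rfl⟩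
  linarith

end ProductDual

/-- For a family `(E_α)` of vector lattices, the order continuous dual of
`∏ E_α` is lattice isomorphic to the direct sum `⊕ (E_α)^∼_n` of the order continuous
duals via `φ ↦ (φ ∘ ι_α)_α`, where `ι_α` is the canonical injection.  Stated
concretely: the map is injective; it takes values in the direct sum (finitely many
nonzero coordinates, each coordinate order bounded and order continuous); it is onto
the direct sum; and it is bipositive (hence, being linear, a lattice isomorphism). -/
theorem orderContinuousDual_of_product
    {I : Type*} [DecidableEq I] {E : I → Type*}
    [∀ i, Lattice (E i)] [∀ i, AddCommGroup (E i)]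
    [∀ i, CovariantClass (E i) (E i) (· + ·) (· ≤ ·)] [∀ i, Module ℝ (E i)] :
    -- injectivity
    (∀ φ ψ : (∀ i, E i) →ₗ[ℝ] ℝ,
      OrdBddFunctional φ → OrdContFunctional φ →
      OrdBddFunctional ψ → OrdContFunctional ψ →
      (∀ i, φ.comp (LinearMap.single ℝ E i) = ψ.comp (LinearMap.single ℝ E i)) →
      φ = ψ) ∧
    -- the map lands in the direct sum of the order continuous duals
    (∀ φ : (∀ i, E i) →ₗ[ℝ] ℝ, OrdBddFunctional φ → OrdContFunctional φ →
      {i : I | φ.comp (LinearMap.single ℝ E i) ≠ 0}.Finite ∧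
      ∀ i, OrdBddFunctional (φ.comp (LinearMap.single ℝ E i)) ∧
        OrdContFunctional (φ.comp (LinearMap.single ℝ E i))) ∧
    -- surjectivity onto the direct sum
    (∀ ψ : ∀ i, E i →ₗ[ℝ] ℝ,
      (∀ i, OrdBddFunctional (ψ i) ∧ OrdContFunctional (ψ i)) →
      {i : I | ψ i ≠ 0}.Finite →
      ∃ φ : (∀ i, E i) →ₗ[ℝ] ℝ, OrdBddFunctional φ ∧ OrdContFunctional φ ∧
        ∀ i, φ.comp (LinearMap.single ℝ E i) = ψ i) ∧
    -- bipositivity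
    (∀ φ : (∀ i, E i) →ₗ[ℝ] ℝ, OrdBddFunctional φ → OrdContFunctional φ →
      (PosFunctional φ ↔ ∀ i, PosFunctional (φ.comp (LinearMap.single ℝ E i)))) := by
  refine ⟨fun φ ψ hbφ hcφ hbψ hcψ h => ?_, fun φ hb hc => ?_, fun ψ hψ hfin => ?_,
    fun φ _ hc => ⟨fun hpos i u hu => hpos _ (Pi.single_nonneg.2 hu),
      hc.posFunctional_of_comp_single⟩⟩
  · have hdiff : φ - ψ ∈ orderContinuousDual _ := sub_mem ⟨hbφ, hcφ⟩ ⟨hbψ, hcψ⟩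
    refine sub_eq_zero.1 (hdiff.2.eq_zero_of_comp_single fun i => ?_)
    rw [LinearMap.sub_comp, h i, sub_self]
  · exact ⟨hb.finite_setOf_comp_single_ne_zero, fun i => ⟨hb.comp (Pi.single_mono i),
      hc.comp (Pi.single_mono i) fun _ hne hglb => isGLB_image_single hne hglb⟩⟩
  · obtain ⟨hb, hc⟩ : ∑ i ∈ hfin.toFinset, (ψ i).comp (LinearMap.proj i) ∈
        orderContinuousDual _ := AddSubgroup.sum_mem _ fun i _ =>
      ⟨(hψ i).1.comp fun _ _ h => h i,
        (hψ i).2.comp (fun _ _ h => h i) fun _ _ h => isGLB_pi.1 h i⟩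
    refine ⟨_, hb, hc, fun i => LinearMap.ext fun u => ?_⟩
    simp only [LinearMap.comp_apply, LinearMap.coe_single, LinearMap.sum_apply,
      LinearMap.proj_apply]
    rw [Finset.sum_eq_single i (fun j _ hji => by rw [Pi.single_eq_of_ne hji, map_zero])
      fun hi => by simp_all, Pi.single_eq_same]
end

section
/- Let ((E_α), (p_{β,α})) be an inverse system of vector lattices whose connecting maps are normal lattice homomorphisms, and let E ⊆ ∏ E_α be the inverse limit sublattice. If every E_α is Dedekind complete, then E is Dedekind complete. -/
/-!
The supremum is taken coordinatewise. A connecting map `p_{βα}` sends the `β`-coordinates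
of a set of threads onto its `α`-coordinates and preserves suprema, so the coordinatewise
suprema form a thread; being the supremum in the whole product, it is a fortiori the
supremum among threads.
-/

/-- The set of threads of an inverse system `(E_α, p_{βα})` inside the product. -/
def threads {I : Type*} [Preorder I] {E : I → Type*}
    [∀ i, AddCommGroup (E i)] [∀ i, Module ℝ (E i)]
    (p : ∀ {i j : I}, i ≤ j → (E j →ₗ[ℝ] E i)) : Set (∀ i, E i) :=
  {u | ∀ (i j : I) (h : i ≤ j), p h (u j) = u i}

section Defs

variable {X Y : Type*} [Lattice X] [AddCommGroup X] [Module ℝ X]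
  [Lattice Y] [AddCommGroup Y] [Module ℝ Y]

/-- A normal lattice homomorphism: a lattice homomorphism preserving arbitrary
(existing) suprema and infima. -/
def IsNormalLatHom (T : X →ₗ[ℝ] Y) : Prop :=
  (∀ a b : X, T (a ⊔ b) = T a ⊔ T b) ∧
  (∀ (A : Set X) (m : X), IsGLB A m → IsGLB (T '' A) (T m)) ∧
  (∀ (A : Set X) (m : X), IsLUB A m → IsLUB (T '' A) (T m))

end Defs

section Threads

variable {I : Type*} [Preorder I] {E : I → Type*}
  [∀ i, AddCommGroup (E i)] [∀ i, Module ℝ (E i)]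
  {p : ∀ {i j : I}, i ≤ j → (E j →ₗ[ℝ] E i)}

theorem image_image_eval_of_subset_threads {A : Set (∀ i, E i)} (hA : A ⊆ threads p)
    {i j : I} (h : i ≤ j) :
    p h '' (Function.eval j '' A) = Function.eval i '' A := by
  rw [Set.image_image]
  exact Set.image_congr fun a ha => hA ha i j h

theorem mem_threads_of_isLUB_eval [∀ i, PartialOrder (E i)]
    (hp : ∀ {i j : I} (h : i ≤ j) (s : Set (E j)) (x : E j),
      IsLUB s x → IsLUB (p h '' s) (p h x))
    {A : Set (∀ i, E i)} (hA : A ⊆ threads p) {m : ∀ i, E i}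
    (hm : ∀ i, IsLUB (Function.eval i '' A) (m i)) : m ∈ threads p := by
  intro i j h
  have hpm := hp h _ _ (hm j)
  rw [image_image_eval_of_subset_threads hA h] at hpm
  exact hpm.unique (hm i)

end Threads

theorem inverseLimit_dedekindComplete_general
    {I : Type*} [Preorder I]
    {E : I → Type*} [∀ i, Lattice (E i)] [∀ i, AddCommGroup (E i)]
    [∀ i, Module ℝ (E i)]
    (p : ∀ {i j : I}, i ≤ j → (E j →ₗ[ℝ] E i))
    (hpn : ∀ {i j : I} (h : i ≤ j), IsNormalLatHom (p h))
    (hDC : ∀ (i : I) (A : Set (E i)), A.Nonempty → BddAbove A → ∃ m, IsLUB A m) :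
    ∀ A : Set (∀ i, E i), A ⊆ threads p → A.Nonempty →
      (∃ b ∈ threads p, ∀ a ∈ A, a ≤ b) →
      ∃ m ∈ threads p, (∀ a ∈ A, a ≤ m) ∧
        ∀ b ∈ threads p, (∀ a ∈ A, a ≤ b) → m ≤ b := by
  rintro A hA hne ⟨b, -, hb⟩
  choose m hm using fun i =>
    hDC i _ (hne.image _) ((Function.monotone_eval i).map_bddAbove ⟨b, hb⟩)
  have hmA : IsLUB A m := isLUB_pi.2 hm
  exact ⟨m, mem_threads_of_isLUB_eval (fun h => (hpn h).2.2) hA hm, hmA.1,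
    fun c _ hc => hmA.2 hc⟩

/-- Let `((E_α), (p_{βα}))` be an inverse system of vector lattices
whose connecting maps are normal lattice homomorphisms, and let `E ⊆ ∏ E_α` be the
inverse limit (thread) sublattice.  If every `E_α` is Dedekind complete, then `E` is
Dedekind complete: every nonempty subset of `E` bounded above in `E` has a least
upper bound within `E`. -/
theorem inverseLimit_dedekindComplete
    {I : Type*} [Preorder I] [IsDirected I (· ≤ ·)]
    {E : I → Type*} [∀ i, Lattice (E i)] [∀ i, AddCommGroup (E i)]
    [∀ i, CovariantClass (E i) (E i) (· + ·) (· ≤ ·)] [∀ i, Module ℝ (E i)]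
    (p : ∀ {i j : I}, i ≤ j → (E j →ₗ[ℝ] E i))
    (hpn : ∀ {i j : I} (h : i ≤ j), IsNormalLatHom (p h))
    (hpcomp : ∀ {i j k : I} (hij : i ≤ j) (hjk : j ≤ k) (x : E k),
      p hij (p hjk x) = p (hij.trans hjk) x)
    (hDC : ∀ (i : I) (A : Set (E i)), A.Nonempty → BddAbove A → ∃ m, IsLUB A m) :
    ∀ A : Set (∀ i, E i), A ⊆ threads p → A.Nonempty →
      (∃ b ∈ threads p, ∀ a ∈ A, a ≤ b) →
      ∃ m ∈ threads p, (∀ a ∈ A, a ≤ m) ∧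
        ∀ b ∈ threads p, (∀ a ∈ A, a ≤ b) → m ≤ b :=
  inverseLimit_dedekindComplete_general p hpn hDC
end

section
/- Let ((E_α), (p_{β,α})) be an inverse system of Archimedean, relatively uniformly complete vector lattices with lattice homomorphism connecting maps, and let E be its inverse limit. Then E is relatively uniformly complete. -/
section RelativelyUniform

variable {A B : Type*} [Lattice A] [AddCommGroup A] [Module ℝ A]
  [Lattice B] [AddCommGroup B] [Module ℝ B]

def IsRUCauchy (x : ℕ → A) (w : A) : Prop :=
  ∀ ε : ℝ, 0 < ε → ∃ N : ℕ, ∀ m n : ℕ, N ≤ m → N ≤ n → |x m - x n| ≤ ε • w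

def RUTendsto (x : ℕ → A) (y w : A) : Prop :=
  ∀ ε : ℝ, 0 < ε → ∃ N : ℕ, ∀ n : ℕ, N ≤ n → |x n - y| ≤ ε • w

lemma RUTendsto.map_of_map_sup (T : A →ₗ[ℝ] B) (hT : ∀ a b, T (a ⊔ b) = T a ⊔ T b)
    {x : ℕ → A} {y w : A} (hxy : RUTendsto x y w) : RUTendsto (fun n => T (x n)) (T y) (T w) := by
  have hmono : Monotone T := fun a b hab => by
    rw [← sup_eq_right.mpr hab, hT]
    exact le_sup_left
  have habs : ∀ a, |T a| = T |a| := fun a => by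
    rw [abs, abs, hT, map_neg]
  intro ε hε
  obtain ⟨N, hN⟩ := hxy ε hε
  refine ⟨N, fun n hn => ?_⟩
  rw [← map_sub, habs, ← map_smul]
  exact hmono (hN n hn)

variable [AddLeftMono A]

lemma le_zero_of_forall_le_smul (harch : ∀ u v : A, (∀ n : ℕ, n • u ≤ v) → u ≤ 0)
    {a w : A} (hw : 0 ≤ w) (h : ∀ ε : ℝ, 0 < ε → a ≤ ε • w) : a ≤ 0 := by
  refine harch a w fun n => ?_
  rcases Nat.eq_zero_or_pos n with rfl | hn
  · simpa using hw
  · have hn' : (0 : ℝ) < n := Nat.cast_pos.mpr hn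
    calc n • a ≤ n • ((n : ℝ)⁻¹ • w) := nsmul_le_nsmul_right (h _ (inv_pos.mpr hn')) n
      _ = w := by rw [← Nat.cast_smul_eq_nsmul ℝ, smul_smul, mul_inv_cancel₀ hn'.ne', one_smul]

lemma RUTendsto.abs_sub_le (harch : ∀ u v : A, (∀ n : ℕ, n • u ≤ v) → u ≤ 0)
    {x : ℕ → A} {y w : A} (hw : 0 ≤ w) (hxy : RUTendsto x y w) {a b : A} {N : ℕ}
    (hb : ∀ m, N ≤ m → |a - x m| ≤ b) : |a - y| ≤ b := by
  suffices |a - y| - b ≤ 0 from sub_nonpos.mp this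
  refine le_zero_of_forall_le_smul harch hw fun δ hδ => ?_
  obtain ⟨M, hM⟩ := hxy δ hδ
  refine sub_le_iff_le_add'.mpr ?_
  calc |a - y| ≤ |a - x (max N M)| + |x (max N M) - y| := by
        simpa only [sub_add_sub_cancel] using abs_add_le (a - x (max N M)) (x (max N M) - y)
    _ ≤ b + δ • w := add_le_add (hb _ (le_max_left _ _)) (hM _ (le_max_right _ _))

lemma RUTendsto.unique (harch : ∀ u v : A, (∀ n : ℕ, n • u ≤ v) → u ≤ 0)
    {x : ℕ → A} {y z w w' : A} (hw : 0 ≤ w) (hw' : 0 ≤ w')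
    (hy : RUTendsto x y w) (hz : RUTendsto x z w') : y = z := by
  have hyz : |y - z| ≤ 0 := le_zero_of_forall_le_smul harch hw fun ε hε => by
    obtain ⟨N, hN⟩ := hy ε hε
    exact hz.abs_sub_le harch hw' fun m hm => abs_sub_comm y (x m) ▸ hN m hm
  obtain ⟨hle, hge⟩ := abs_le'.mp hyz
  exact sub_eq_zero.mp (le_antisymm hle (neg_nonpos.mp hge))

end RelativelyUniform

section Pi

variable {ι : Type*} {F : ι → Type*} [∀ i, Lattice (F i)] [∀ i, AddCommGroup (F i)]
  [∀ i, Module ℝ (F i)] {x : ℕ → ∀ i, F i} {w : ∀ i, F i}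

lemma IsRUCauchy.apply (hx : IsRUCauchy x w) (i : ι) : IsRUCauchy (fun n => x n i) (w i) :=
  fun ε hε => (hx ε hε).imp fun _ hN m n hm hn => hN m n hm hn i

lemma RUTendsto.apply {y : ∀ i, F i} (hxy : RUTendsto x y w) (i : ι) :
    RUTendsto (fun n => x n i) (y i) (w i) :=
  fun ε hε => (hxy ε hε).imp fun _ hN n hn => hN n hn i

lemma IsRUCauchy.ruTendsto_of_forall_apply [∀ i, AddLeftMono (F i)]
    (harch : ∀ (i : ι) (u v : F i), (∀ n : ℕ, n • u ≤ v) → u ≤ 0) (hx : IsRUCauchy x w)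
    {y w' : ∀ i, F i} (hw' : 0 ≤ w') (hy : ∀ i, RUTendsto (fun n => x n i) (y i) (w' i)) :
    RUTendsto x y w :=
  fun ε hε => (hx ε hε).imp fun _ hN n hn i =>
    (hy i).abs_sub_le (harch i) (hw' i) fun m hm => hN n m hn hm i

end Pi

theorem inverseLimit_relativelyUniformlyComplete_general
    {I : Type*} [Preorder I]
    {E : I → Type*} [∀ i, Lattice (E i)] [∀ i, AddCommGroup (E i)]
    [∀ i, CovariantClass (E i) (E i) (· + ·) (· ≤ ·)] [∀ i, Module ℝ (E i)]
    (p : ∀ {i j : I}, i ≤ j → (E j →ₗ[ℝ] E i))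
    (hplat : ∀ {i j : I} (h : i ≤ j) (a b : E j), p h (a ⊔ b) = p h a ⊔ p h b)
    -- each `E_α` is Archimedean
    (harch : ∀ (i : I) (u v : E i), (∀ n : ℕ, n • u ≤ v) → u ≤ 0)
    -- each `E_α` is relatively uniformly complete
    (hruc : ∀ (i : I) (x : ℕ → E i) (w : E i), 0 ≤ w →
      (∀ ε : ℝ, 0 < ε → ∃ N : ℕ, ∀ m n : ℕ, N ≤ m → N ≤ n → |x m - x n| ≤ ε • w) →
      ∃ (y : E i) (w' : E i), 0 ≤ w' ∧
        ∀ ε : ℝ, 0 < ε → ∃ N : ℕ, ∀ n : ℕ, N ≤ n → |x n - y| ≤ ε • w') :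
    -- conclusion: the thread sublattice is relatively uniformly complete
    ∀ (x : ℕ → ∀ i, E i), (∀ n, x n ∈ threads p) →
      ∀ w ∈ threads p, 0 ≤ w →
      (∀ ε : ℝ, 0 < ε → ∃ N : ℕ, ∀ m n : ℕ, N ≤ m → N ≤ n → |x m - x n| ≤ ε • w) →
      ∃ y ∈ threads p, ∃ w' ∈ threads p, 0 ≤ w' ∧
        ∀ ε : ℝ, 0 < ε → ∃ N : ℕ, ∀ n : ℕ, N ≤ n → |x n - y| ≤ ε • w' := by
  intro x hx w hw hw0 hcauchy
  choose y w' hw' hy using fun i => hruc i _ _ (hw0 i) (IsRUCauchy.apply hcauchy i)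
  have hxy : RUTendsto x y w := IsRUCauchy.ruTendsto_of_forall_apply harch hcauchy hw' hy
  have hthread : y ∈ threads p := fun i j hij => by
    have hxi : RUTendsto (fun n => x n i) (p hij (y j)) (w i) := by
      simpa only [hx _ i j hij, hw i j hij] using
        (hxy.apply j).map_of_map_sup (p hij) (hplat hij)
    exact hxi.unique (harch i) (hw0 i) (hw' i) (hy i)
  exact ⟨y, hthread, w, hw, hw0, hxy⟩

/-- An inverse limit of Archimedean, relatively uniformly complete
vector lattices (with lattice homomorphisms as connecting maps) is relatively
uniformly complete: every sequence of threads which is relatively uniformly Cauchy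
with respect to a regulator which is a thread converges relatively uniformly, within
the thread sublattice, to a thread. -/
theorem inverseLimit_relativelyUniformlyComplete
    {I : Type*} [Preorder I] [IsDirected I (· ≤ ·)]
    {E : I → Type*} [∀ i, Lattice (E i)] [∀ i, AddCommGroup (E i)]
    [∀ i, CovariantClass (E i) (E i) (· + ·) (· ≤ ·)] [∀ i, Module ℝ (E i)]
    (p : ∀ {i j : I}, i ≤ j → (E j →ₗ[ℝ] E i))
    (hplat : ∀ {i j : I} (h : i ≤ j) (a b : E j), p h (a ⊔ b) = p h a ⊔ p h b)
    (hpcomp : ∀ {i j k : I} (hij : i ≤ j) (hjk : j ≤ k) (x : E k),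
      p hij (p hjk x) = p (hij.trans hjk) x)
    -- each `E_α` is Archimedean
    (harch : ∀ (i : I) (u v : E i), (∀ n : ℕ, n • u ≤ v) → u ≤ 0)
    -- each `E_α` is relatively uniformly complete
    (hruc : ∀ (i : I) (x : ℕ → E i) (w : E i), 0 ≤ w →
      (∀ ε : ℝ, 0 < ε → ∃ N : ℕ, ∀ m n : ℕ, N ≤ m → N ≤ n → |x m - x n| ≤ ε • w) →
      ∃ (y : E i) (w' : E i), 0 ≤ w' ∧
        ∀ ε : ℝ, 0 < ε → ∃ N : ℕ, ∀ n : ℕ, N ≤ n → |x n - y| ≤ ε • w') :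
    -- conclusion: the thread sublattice is relatively uniformly complete
    ∀ (x : ℕ → ∀ i, E i), (∀ n, x n ∈ threads p) →
      ∀ w ∈ threads p, 0 ≤ w →
      (∀ ε : ℝ, 0 < ε → ∃ N : ℕ, ∀ m n : ℕ, N ≤ m → N ≤ n → |x m - x n| ≤ ε • w) →
      ∃ y ∈ threads p, ∃ w' ∈ threads p, 0 ≤ w' ∧
        ∀ ε : ℝ, 0 < ε → ∃ N : ℕ, ∀ n : ℕ, N ≤ n → |x n - y| ≤ ε • w' :=
  inverseLimit_relativelyUniformlyComplete_general p hplat harch hruc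
end

section
/- Let ((E_α)_{α∈I}, (p_{β,α})) be an inverse system of vector lattices with lattice homomorphism connecting maps, and (E, (p_α)) its inverse limit. If each E_α has a separating order dual (i.e., the order bounded functionals separate points of E_α), then E has a separating order dual. -/
theorem OrdBddFunctional.comp_of_monotone {X Y : Type*} [Lattice X] [AddCommGroup X]
    [Module ℝ X] [Lattice Y] [AddCommGroup Y] [Module ℝ Y] {φ : Y →ₗ[ℝ] ℝ}
    (hφ : OrdBddFunctional φ) {T : X →ₗ[ℝ] Y} (hT : Monotone T) :
    OrdBddFunctional (φ.comp T) := by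
  intro u hu
  have hTu : (0 : Y) ≤ T u := by simpa using hT hu
  have hsub : φ.comp T '' Set.Icc 0 u ⊆ φ '' Set.Icc 0 (T u) := by
    rintro _ ⟨v, ⟨hv0, hvu⟩, rfl⟩
    exact ⟨T v, ⟨by simpa using hT hv0, hT hvu⟩, rfl⟩
  exact ⟨(hφ _ hTu).1.mono hsub, (hφ _ hTu).2.mono hsub⟩

theorem inverseLimit_separating_orderDual_general
    {I : Type*}
    {E : I → Type*} [∀ i, Lattice (E i)] [∀ i, AddCommGroup (E i)]
    [∀ i, Module ℝ (E i)]
    {L : Type*} [Lattice L] [AddCommGroup L]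
    [Module ℝ L]
    (q : ∀ i : I, L →ₗ[ℝ] E i)
    (hqlat : ∀ (i : I) (a b : L), q i (a ⊔ b) = q i a ⊔ q i b)
    (hsep : ∀ x y : L, (∀ i, q i x = q i y) → x = y)
    -- each `E_α` has a separating order dual
    (hEsep : ∀ (i : I) (u : E i), u ≠ 0 →
      ∃ φ : E i →ₗ[ℝ] ℝ, OrdBddFunctional φ ∧ φ u ≠ 0) :
    ∀ x : L, x ≠ 0 → ∃ φ : L →ₗ[ℝ] ℝ, OrdBddFunctional φ ∧ φ x ≠ 0 := by
  intro x hx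
  obtain ⟨i, hi⟩ : ∃ i, q i x ≠ 0 := by
    by_contra! h
    exact hx (hsep x 0 fun i => by simpa using h i)
  obtain ⟨ψ, hψ, hψx⟩ := hEsep i (q i x) hi
  exact ⟨ψ.comp (q i), hψ.comp_of_monotone (Monotone.of_map_sup (hqlat i)), hψx⟩

/-- Let `((E_α), (p_{βα}))` be an inverse system of vector lattices with
lattice homomorphism connecting maps, and `(L, (q_α))` its inverse limit (expressed
here by: the `q_α` form a compatible system of lattice homomorphisms which jointly
separate the points of `L` and whose joint image is exactly the thread set).  If each
`E_α` has a separating order dual, then `L` has a separating order dual. -/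
theorem inverseLimit_separating_orderDual
    {I : Type*} [Preorder I] [IsDirected I (· ≤ ·)]
    {E : I → Type*} [∀ i, Lattice (E i)] [∀ i, AddCommGroup (E i)]
    [∀ i, CovariantClass (E i) (E i) (· + ·) (· ≤ ·)] [∀ i, Module ℝ (E i)]
    (p : ∀ {i j : I}, i ≤ j → (E j →ₗ[ℝ] E i))
    (hplat : ∀ {i j : I} (h : i ≤ j) (a b : E j), p h (a ⊔ b) = p h a ⊔ p h b)
    (hpcomp : ∀ {i j k : I} (hij : i ≤ j) (hjk : j ≤ k) (x : E k),
      p hij (p hjk x) = p (hij.trans hjk) x)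
    {L : Type*} [Lattice L] [AddCommGroup L]
    [CovariantClass L L (· + ·) (· ≤ ·)] [Module ℝ L]
    (q : ∀ i : I, L →ₗ[ℝ] E i)
    (hqlat : ∀ (i : I) (a b : L), q i (a ⊔ b) = q i a ⊔ q i b)
    (hqcompat : ∀ {i j : I} (h : i ≤ j) (x : L), p h (q j x) = q i x)
    (hsep : ∀ x y : L, (∀ i, q i x = q i y) → x = y)
    (hthreads : ∀ t : ∀ i, E i, (∀ (i j : I) (h : i ≤ j), p h (t j) = t i) →
      ∃ x : L, ∀ i, q i x = t i)
    -- each `E_α` has a separating order dual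
    (hEsep : ∀ (i : I) (u : E i), u ≠ 0 →
      ∃ φ : E i →ₗ[ℝ] ℝ, OrdBddFunctional φ ∧ φ u ≠ 0) :
    ∀ x : L, x ≠ 0 → ∃ φ : L →ₗ[ℝ] ℝ, OrdBddFunctional φ ∧ φ x ≠ 0 :=
  inverseLimit_separating_orderDual_general q hqlat hsep hEsep
end
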